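/- Let T > 0, J = [0,T], and α > 0. Assume the continuous functions v, v₁, w, w₁ : J → ℝ and g : J × ℝ → ℝ satisfy v(t) ≤ v₁(t) + (1/Γ(α)) ∫₀ᵗ (t−s)^{α−1} g(s, v(s)) ds and w(t) ≥ w₁(t) + (1/Γ(α)) ∫₀ᵗ (t−s)^{α−1} g(s, w(s)) ds for all t ∈ J. Suppose further that for each fixed t ∈ J the map x ↦ g(t,x) is nondecreasing, and that v₁(t) < w₁(t) for all t ∈ J. Then v(t) < w(t) for all t ∈ J. -/

import Mathlib

/-!
Argue by contradiction at the first time `t₀` where `w - v` becomes nonpositive. On `[0, t₀)` we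
have `v < w`, so monotonicity of `g` and positivity of the kernel `(t₀ - s) ^ (α - 1)` give
`I(g(·, v))(t₀) ≤ I(g(·, w))(t₀)` for the Riemann–Liouville integral `I`. Together with
`v₁ t₀ < w₁ t₀` the two integral inequalities then force `v t₀ < w t₀`.
-/

open MeasureTheory Set intervalIntegral

noncomputable def riemannLiouvilleIntegral (α : ℝ) (f : ℝ → ℝ) (t : ℝ) : ℝ :=
  1 / Real.Gamma α * ∫ s in (0 : ℝ)..t, (t - s) ^ (α - 1) * f s

lemma intervalIntegrable_rpow_sub_mul {α t a b : ℝ} (hα : 0 < α) {f : ℝ → ℝ}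
    (hf : ContinuousOn f (uIcc a b)) :
    IntervalIntegrable (fun s => (t - s) ^ (α - 1) * f s) volume a b := by
  have hker : IntervalIntegrable (fun x : ℝ => x ^ (α - 1)) volume (t - a) (t - b) :=
    intervalIntegrable_rpow' (by linarith)
  have hker' : IntervalIntegrable (fun s => (t - s) ^ (α - 1)) volume a b := by
    simpa using hker.comp_sub_left t
  exact hker'.mul_continuousOn hf

lemma riemannLiouvilleIntegral_mono {α t : ℝ} (hα : 0 < α) (ht : 0 ≤ t) {f h : ℝ → ℝ}
    (hf : ContinuousOn f (Icc 0 t)) (hh : ContinuousOn h (Icc 0 t))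
    (hfh : ∀ s ∈ Ico 0 t, f s ≤ h s) :
    riemannLiouvilleIntegral α f t ≤ riemannLiouvilleIntegral α h t := by
  rw [← uIcc_of_le ht] at hf hh
  refine mul_le_mul_of_nonneg_left ?_ (one_div_nonneg.2 (Real.Gamma_pos_of_pos hα).le)
  refine integral_mono_on_of_le_Ioo ht (intervalIntegrable_rpow_sub_mul hα hf)
    (intervalIntegrable_rpow_sub_mul hα hh) fun s hs => ?_
  exact mul_le_mul_of_nonneg_left (hfh s (Ioo_subset_Ico_self hs))
    (Real.rpow_nonneg (by linarith [hs.2]) _)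

lemma ContinuousOn.exists_first_nonpos {φ : ℝ → ℝ} {a b : ℝ} (hφ : ContinuousOn φ (Icc a b))
    (hne : ∃ t ∈ Icc a b, φ t ≤ 0) :
    ∃ t₀ ∈ Icc a b, φ t₀ ≤ 0 ∧ ∀ s ∈ Ico a t₀, 0 < φ s := by
  set S := Icc a b ∩ φ ⁻¹' Iic 0
  have hS : IsCompact S :=
    isCompact_Icc.of_isClosed_subset (hφ.preimage_isClosed_of_isClosed isClosed_Icc isClosed_Iic)
      inter_subset_left
  obtain ⟨t₀, ⟨ht₀, hφt₀⟩, hleast⟩ := hS.exists_isLeast hne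
  refine ⟨t₀, ht₀, hφt₀, fun s hs => lt_of_not_ge fun hφs => ?_⟩
  exact hs.2.not_ge (hleast ⟨⟨hs.1, hs.2.le.trans ht₀.2⟩, hφs⟩)

lemma ContinuousOn.comp_graph {g : ℝ → ℝ → ℝ} {u : ℝ → ℝ} {s : Set ℝ}
    (hg : ContinuousOn (fun p : ℝ × ℝ => g p.1 p.2) (s ×ˢ univ)) (hu : ContinuousOn u s) :
    ContinuousOn (fun t => g t (u t)) s :=
  hg.comp (continuousOn_id.prodMk hu) fun _ ht => ⟨ht, mem_univ _⟩

theorem volterra_comparison_general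
    (T α : ℝ) (hα : 0 < α)
    (v v₁ w w₁ : ℝ → ℝ) (g : ℝ → ℝ → ℝ)
    (hv_cont : ContinuousOn v (Set.Icc 0 T))
    (hw_cont : ContinuousOn w (Set.Icc 0 T))
    (hg_cont : ContinuousOn (fun p : ℝ × ℝ => g p.1 p.2) (Set.Icc 0 T ×ˢ Set.univ))
    (hv : ∀ t ∈ Set.Icc (0 : ℝ) T,
      v t ≤ v₁ t + (1 / Real.Gamma α) * ∫ s in (0 : ℝ)..t, (t - s) ^ (α - 1) * g s (v s))
    (hw : ∀ t ∈ Set.Icc (0 : ℝ) T,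
      w t ≥ w₁ t + (1 / Real.Gamma α) * ∫ s in (0 : ℝ)..t, (t - s) ^ (α - 1) * g s (w s))
    (hg_mono : ∀ t ∈ Set.Icc (0 : ℝ) T, Monotone (fun x => g t x))
    (h₁ : ∀ t ∈ Set.Icc (0 : ℝ) T, v₁ t < w₁ t) :
    ∀ t ∈ Set.Icc (0 : ℝ) T, v t < w t := by
  by_contra! hcross
  obtain ⟨t₀, ht₀, hwv, hbefore⟩ := (hw_cont.sub hv_cont).exists_first_nonpos
    (hcross.imp fun t ⟨ht, hle⟩ => ⟨ht, sub_nonpos.2 hle⟩)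
  have hsub : Icc 0 t₀ ⊆ Icc 0 T := Icc_subset_Icc_right ht₀.2
  have hI : riemannLiouvilleIntegral α (fun s => g s (v s)) t₀ ≤
      riemannLiouvilleIntegral α (fun s => g s (w s)) t₀ :=
    riemannLiouvilleIntegral_mono hα ht₀.1 ((hg_cont.comp_graph hv_cont).mono hsub)
      ((hg_cont.comp_graph hw_cont).mono hsub) fun s hs =>
        hg_mono s (hsub (Ico_subset_Icc_self hs)) (sub_pos.1 (hbefore s hs)).le
  simp only [riemannLiouvilleIntegral] at hI
  linarith [hv t₀ ht₀, hw t₀ ht₀, h₁ t₀ ht₀, sub_nonpos.1 hwv]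

/-- Comparison lemma for weakly singular Volterra integral inequalities
(Lemma 2.1 of the paper, valid for all `α > 0`). -/
theorem volterra_comparison
    (T α : ℝ) (hT : 0 < T) (hα : 0 < α)
    (v v₁ w w₁ : ℝ → ℝ) (g : ℝ → ℝ → ℝ)
    (hv_cont : ContinuousOn v (Set.Icc 0 T)) (hv₁_cont : ContinuousOn v₁ (Set.Icc 0 T))
    (hw_cont : ContinuousOn w (Set.Icc 0 T)) (hw₁_cont : ContinuousOn w₁ (Set.Icc 0 T))
    (hg_cont : ContinuousOn (fun p : ℝ × ℝ => g p.1 p.2) (Set.Icc 0 T ×ˢ Set.univ))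
    (hv : ∀ t ∈ Set.Icc (0 : ℝ) T,
      v t ≤ v₁ t + (1 / Real.Gamma α) * ∫ s in (0 : ℝ)..t, (t - s) ^ (α - 1) * g s (v s))
    (hw : ∀ t ∈ Set.Icc (0 : ℝ) T,
      w t ≥ w₁ t + (1 / Real.Gamma α) * ∫ s in (0 : ℝ)..t, (t - s) ^ (α - 1) * g s (w s))
    (hg_mono : ∀ t ∈ Set.Icc (0 : ℝ) T, Monotone (fun x => g t x))
    (h₁ : ∀ t ∈ Set.Icc (0 : ℝ) T, v₁ t < w₁ t) :
    ∀ t ∈ Set.Icc (0 : ℝ) T, v t < w t :=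
  volterra_comparison_general T α hα v v₁ w w₁ g hv_cont hw_cont hg_cont hv hw hg_mono h₁
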